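/- arXiv:2206.06334 — 2 statements merged into one kernel-verified Lean document; each statement's English description precedes it below -/
import Mathlib

section
/- Let A be a real symmetric positive definite n×n matrix, X := {x ∈ ℝⁿ : Ax·x ≤ ℏ} and X^ℏ = {p ∈ ℝⁿ : A⁻¹p·p ≤ ℏ} its ℏ-polar dual. For every invertible linear map T : ℝ^{2n} → ℝ^{2n} and every z₀ ∈ ℝ^{2n} such that the ellipsoid z₀ + T(B^{2n}(√ℏ)) is contained in X × X^ℏ, one has |det T| ≤ 1; equivalently, the Lebesgue volume of any ellipsoid contained in X × X^ℏ is at most the volume of B^{2n}(√ℏ). (This volume is attained by the ellipsoid {(x,p) : Ax·x + A⁻¹p·p ≤ ℏ}, the image of B^{2n}(√ℏ) by the symplectic matrix [[A^{−1/2},0],[0,A^{1/2}]].) -/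
/-!
Write `A = BᵀB`, `A⁻¹ = B'ᵀB'`, and let `T₁`, `T₂` be the row blocks of `T`. Testing `p ∈ X^ℏ`
against the boundary point `√(ℏ / A⁻¹p·p) • A⁻¹p` of `X` gives `X^ℏ ⊆ {p : A⁻¹p·p ≤ ℏ}`, so the
hypothesis says that `B z₀₁ + BT₁(B(√ℏ))` and `B' z₀₂ + B'T₂(B(√ℏ))` lie in the ball `B(√ℏ)`.
As the ball is symmetric, the parallelogram law removes the centres: `BT₁` and `B'T₂` are
contractions, so every row of `D = diag(B, B') T` has length at most `1`. Then `tr(DDᵀ) ≤ 2n`,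
AM–GM on the eigenvalues of `DDᵀ` gives `det(D)² ≤ 1`, and `|det D| = |det T|` because
`det(B)² det(B')² = det A · det A⁻¹ = 1`.
-/

open Matrix Set

noncomputable section

/-- The ℏ-polar dual of a set `X ⊆ ℝⁿ`. -/
def polarDual {n : ℕ} (ℏ : ℝ) (X : Set (Fin n → ℝ)) : Set (Fin n → ℝ) :=
  {p | ∀ x ∈ X, p ⬝ᵥ x ≤ ℏ}

/-- The closed ball `B²ⁿ(√ℏ) = {z : z·z ≤ ℏ}` of radius `√ℏ` centered at `0`. -/
def ballh (n : ℕ) (ℏ : ℝ) : Set (Fin n ⊕ Fin n → ℝ) :=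
  {z | z ⬝ᵥ z ≤ ℏ}

namespace Matrix

variable {ι m n : Type*} [Fintype ι] [Fintype m] [Fintype n]

theorem transpose_mul_self_mulVec_dotProduct {R : Type*} [CommSemiring R] (B : Matrix n m R)
    (x : m → R) : (Bᵀ * B) *ᵥ x ⬝ᵥ x = B *ᵥ x ⬝ᵥ B *ᵥ x := by
  rw [← mulVec_mulVec, dotProduct_comm, dotProduct_mulVec, vecMul_transpose]

section OrderedRing

variable {R : Type*} [CommRing R] [LinearOrder R] [IsStrictOrderedRing R]

theorem dotProduct_self_nonneg (v : m → R) : 0 ≤ v ⬝ᵥ v :=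
  Finset.sum_nonneg fun i _ => mul_self_nonneg (v i)

theorem sq_le_dotProduct_self (v : m → R) (k : m) : v k ^ 2 ≤ v ⬝ᵥ v := by
  simpa [dotProduct, sq] using
    Finset.single_le_sum (fun i _ => mul_self_nonneg (v i)) (Finset.mem_univ k)

theorem dotProduct_self_le_of_add_of_sub {c : R} (u v : m → R)
    (h₁ : (u + v) ⬝ᵥ (u + v) ≤ c) (h₂ : (u - v) ⬝ᵥ (u - v) ≤ c) : v ⬝ᵥ v ≤ c := by
  have parallelogram :
      (u + v) ⬝ᵥ (u + v) + (u - v) ⬝ᵥ (u - v) = 2 * (u ⬝ᵥ u) + 2 * (v ⬝ᵥ v) := by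
    simp only [add_dotProduct, dotProduct_add, sub_dotProduct, dotProduct_sub,
      dotProduct_comm v u]
    ring
  linarith [dotProduct_self_nonneg u]

end OrderedRing

theorem dotProduct_self_le_one_of_forall_sq_dotProduct_le {ℏ : ℝ} (hℏ : 0 < ℏ) (u : m → ℝ)
    (h : ∀ w, w ⬝ᵥ w ≤ ℏ → (u ⬝ᵥ w) ^ 2 ≤ ℏ) : u ⬝ᵥ u ≤ 1 := by
  rcases (dotProduct_self_nonneg u).eq_or_lt with hs | hs
  · rw [← hs]; exact zero_le_one
  set s := u ⬝ᵥ u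
  set t := √(ℏ / s)
  have ht : t ^ 2 * s = ℏ := by
    rw [Real.sq_sqrt (div_pos hℏ hs).le, div_mul_cancel₀ _ hs.ne']
  have hball : (t • u) ⬝ᵥ (t • u) = ℏ := by
    rw [smul_dotProduct, dotProduct_smul, smul_smul, smul_eq_mul, ← sq, ht]
  have hrow := h (t • u) hball.le
  rw [dotProduct_smul, smul_eq_mul, mul_pow] at hrow
  have : ℏ * s ≤ ℏ :=
    calc ℏ * s = t ^ 2 * s ^ 2 := by rw [← ht]; ring
      _ ≤ ℏ := hrow
  exact (mul_le_iff_le_one_right hℏ).mp this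

theorem dotProduct_self_row_le_one_of_forall_add_mulVec {ℏ : ℝ} (hℏ : 0 < ℏ) (a : m → ℝ)
    (C : Matrix m ι ℝ) (h : ∀ w, w ⬝ᵥ w ≤ ℏ → (a + C *ᵥ w) ⬝ᵥ (a + C *ᵥ w) ≤ ℏ) (k : m) :
    C k ⬝ᵥ C k ≤ 1 := by
  refine dotProduct_self_le_one_of_forall_sq_dotProduct_le hℏ (C k) fun w hw => ?_
  have hCw : C *ᵥ w ⬝ᵥ C *ᵥ w ≤ ℏ := by
    refine dotProduct_self_le_of_add_of_sub a _ (h w hw) ?_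
    have hneg := h (-w) (by rwa [neg_dotProduct_neg])
    rwa [mulVec_neg, ← sub_eq_add_neg] at hneg
  calc (C k ⬝ᵥ w) ^ 2 = (C *ᵥ w) k ^ 2 := rfl
    _ ≤ C *ᵥ w ⬝ᵥ C *ᵥ w := sq_le_dotProduct_self _ k
    _ ≤ ℏ := hCw

theorem dotProduct_self_row_mul_le_one_of_forall_mem_ellipsoid {ℏ : ℝ} (hℏ : 0 < ℏ)
    (B : Matrix n m ℝ) (R : Matrix m ι ℝ) (a : m → ℝ)
    (h : ∀ w, w ⬝ᵥ w ≤ ℏ → (Bᵀ * B) *ᵥ (a + R *ᵥ w) ⬝ᵥ (a + R *ᵥ w) ≤ ℏ) (k : n) :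
    (B * R) k ⬝ᵥ (B * R) k ≤ 1 := by
  refine dotProduct_self_row_le_one_of_forall_add_mulVec hℏ (B *ᵥ a) _ (fun w hw => ?_) k
  have hw' := h w hw
  rwa [transpose_mul_self_mulVec_dotProduct, mulVec_add, mulVec_mulVec] at hw'

open scoped MatrixOrder in
theorem PosSemidef.exists_eq_transpose_mul_self {A : Matrix n n ℝ} (hA : A.PosSemidef) :
    ∃ B : Matrix n n ℝ, A = Bᵀ * B := by
  classical
  exact CStarAlgebra.nonneg_iff_eq_star_mul_self.mp hA.nonneg

theorem abs_det_mul_det_eq_one_of_transpose_mul_self [DecidableEq n] {A B B' : Matrix n n ℝ}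
    (hA : IsUnit A) (hB : A = Bᵀ * B) (hB' : A⁻¹ = B'ᵀ * B') : |B.det * B'.det| = 1 := by
  have hsq : (B.det * B'.det) ^ 2 = 1 :=
    calc (B.det * B'.det) ^ 2 = (Bᵀ * B).det * (B'ᵀ * B').det := by
          simp only [det_mul, det_transpose]; ring
      _ = 1 := by
          rw [← hB, ← hB', ← det_mul, mul_nonsing_inv _ ((isUnit_iff_isUnit_det A).mp hA),
            det_one]
  rw [← pow_eq_one_iff_of_nonneg (abs_nonneg _) two_ne_zero, sq_abs, hsq]

theorem _root_.Real.prod_le_one_of_sum_le_card (z : ι → ℝ) (hz : ∀ i, 0 ≤ z i)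
    (h : ∑ i, z i ≤ Fintype.card ι) : ∏ i, z i ≤ 1 :=
  calc ∏ i, z i ≤ ∏ i, Real.exp (z i - 1) :=
        Finset.prod_le_prod (fun i _ => hz i) fun i _ => by
          linarith [Real.add_one_le_exp (z i - 1)]
    _ = Real.exp (∑ i, (z i - 1)) := (Real.exp_sum _ _).symm
    _ ≤ 1 := Real.exp_le_one_iff.mpr (by simpa [Finset.sum_sub_distrib] using h)

theorem PosSemidef.det_le_one_of_trace_le_card [DecidableEq ι] {M : Matrix ι ι ℝ}
    (hM : M.PosSemidef) (h : M.trace ≤ Fintype.card ι) : M.det ≤ 1 := by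
  rw [hM.1.trace_eq_sum_eigenvalues] at h
  rw [hM.1.det_eq_prod_eigenvalues]
  simpa using Real.prod_le_one_of_sum_le_card _ hM.eigenvalues_nonneg (by simpa using h)

theorem abs_det_le_one_of_dotProduct_self_row_le_one [DecidableEq ι] (D : Matrix ι ι ℝ)
    (h : ∀ i, D i ⬝ᵥ D i ≤ 1) : |D.det| ≤ 1 := by
  have htrace : (D * Dᵀ).trace ≤ Fintype.card ι :=
    calc (D * Dᵀ).trace = ∑ i, D i ⬝ᵥ D i := rfl
      _ ≤ ∑ _i : ι, 1 := Finset.sum_le_sum fun i _ => h i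
      _ = Fintype.card ι := by simp
  have hdet := (posSemidef_self_mul_conjTranspose D).det_le_one_of_trace_le_card htrace
  rw [det_mul, det_conjTranspose, star_trivial, ← sq] at hdet
  exact (sq_le_one_iff_abs_le_one _).mp hdet

end Matrix

theorem inv_mulVec_dotProduct_le_of_mem_polarDual {n : ℕ} {ℏ : ℝ} (hℏ : 0 < ℏ)
    {A : Matrix (Fin n) (Fin n) ℝ} (hA : A.PosDef) {p : Fin n → ℝ}
    (hp : p ∈ polarDual ℏ {x | A *ᵥ x ⬝ᵥ x ≤ ℏ}) : A⁻¹ *ᵥ p ⬝ᵥ p ≤ ℏ := by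
  set q := A⁻¹ *ᵥ p ⬝ᵥ p
  have hq : 0 ≤ q := by
    have h := hA.inv.posSemidef.dotProduct_mulVec_nonneg p
    rwa [star_trivial, dotProduct_comm] at h
  rcases hq.eq_or_lt with hq0 | hq
  · rw [← hq0]; exact hℏ.le
  set t := √(ℏ / q)
  have ht : t ^ 2 * q = ℏ := by
    rw [Real.sq_sqrt (div_pos hℏ hq).le, div_mul_cancel₀ _ hq.ne']
  have hx : A *ᵥ (t • A⁻¹ *ᵥ p) ⬝ᵥ (t • A⁻¹ *ᵥ p) = t ^ 2 * q := by
    rw [mulVec_smul, mulVec_mulVec, mul_nonsing_inv _ ((isUnit_iff_isUnit_det A).mp hA.isUnit),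
      one_mulVec, smul_dotProduct, dotProduct_smul, dotProduct_comm p, smul_eq_mul, smul_eq_mul]
    ring
  have hpx : t * q ≤ ℏ := by
    have h := hp _ (show _ ≤ ℏ by rw [hx, ht])
    rwa [dotProduct_smul, smul_eq_mul, dotProduct_comm] at h
  have : ℏ * q ≤ ℏ * ℏ :=
    calc ℏ * q = (t * q) ^ 2 := by rw [← ht]; ring
      _ ≤ ℏ ^ 2 := pow_le_pow_left₀ (mul_nonneg (Real.sqrt_nonneg _) hq.le) hpx 2
      _ = ℏ * ℏ := sq ℏ
  exact le_of_mul_le_mul_left this hℏ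

theorem det_le_one_of_ellipsoid_subset_product_general
    {n : ℕ} (ℏ : ℝ) (hℏ : 0 < ℏ)
    (A : Matrix (Fin n) (Fin n) ℝ) (hA : A.PosDef)
    (X : Set (Fin n → ℝ)) (hX : X = {x | A.mulVec x ⬝ᵥ x ≤ ℏ})
    (Xd : Set (Fin n → ℝ)) (hXd : Xd = polarDual ℏ X)
    (T : Matrix (Fin n ⊕ Fin n) (Fin n ⊕ Fin n) ℝ)
    (z₀ : Fin n ⊕ Fin n → ℝ)
    (hsub : (fun w => z₀ + T.mulVec w) '' ballh n ℏ
      ⊆ {z | (z ∘ Sum.inl) ∈ X ∧ (z ∘ Sum.inr) ∈ Xd}) :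
    |T.det| ≤ 1 := by
  subst hX hXd
  obtain ⟨B, hB⟩ := hA.posSemidef.exists_eq_transpose_mul_self
  obtain ⟨B', hB'⟩ := hA.inv.posSemidef.exists_eq_transpose_mul_self
  have hmem (w) (hw : w ⬝ᵥ w ≤ ℏ) := hsub ⟨w, hw, rfl⟩
  have hD : fromBlocks B 0 0 B' * T = fromRows (B * T.toRows₁) (B' * T.toRows₂) := by
    conv_lhs => rw [← fromRows_toRows T]
    rw [fromBlocks_mul_fromRows, Matrix.zero_mul, Matrix.zero_mul, add_zero, zero_add]
  have hrows : ∀ i, (fromBlocks B 0 0 B' * T) i ⬝ᵥ (fromBlocks B 0 0 B' * T) i ≤ 1 := by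
    rw [hD]
    rintro (k | k)
    · exact dotProduct_self_row_mul_le_one_of_forall_mem_ellipsoid hℏ B _ (z₀ ∘ Sum.inl)
        (fun w hw => hB ▸ (hmem w hw).1) k
    · exact dotProduct_self_row_mul_le_one_of_forall_mem_ellipsoid hℏ B' _ (z₀ ∘ Sum.inr)
        (fun w hw => hB' ▸ inv_mulVec_dotProduct_le_of_mem_polarDual hℏ hA (hmem w hw).2) k
  calc |T.det| = |(fromBlocks B 0 0 B' * T).det| := by
        rw [det_mul, det_fromBlocks_zero₂₁, abs_mul,
          abs_det_mul_det_eq_one_of_transpose_mul_self hA.isUnit hB hB', one_mul]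
    _ ≤ 1 := abs_det_le_one_of_dotProduct_self_row_le_one _ hrows

/-- for `X = {x : Ax·x ≤ ℏ}` (`A` symmetric positive definite) and
`X^ℏ` its ℏ-polar dual, every ellipsoid `z₀ + T(B²ⁿ(√ℏ))` (with `T` an invertible
linear map of `ℝ²ⁿ`) contained in `X × X^ℏ` satisfies `|det T| ≤ 1`; hence its
volume is at most that of `B²ⁿ(√ℏ)`. -/
theorem det_le_one_of_ellipsoid_subset_product
    {n : ℕ} (ℏ : ℝ) (hℏ : 0 < ℏ)
    (A : Matrix (Fin n) (Fin n) ℝ) (hA : A.PosDef)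
    (X : Set (Fin n → ℝ)) (hX : X = {x | A.mulVec x ⬝ᵥ x ≤ ℏ})
    (Xd : Set (Fin n → ℝ)) (hXd : Xd = polarDual ℏ X)
    (T : Matrix (Fin n ⊕ Fin n) (Fin n ⊕ Fin n) ℝ) (hT : IsUnit T.det)
    (z₀ : Fin n ⊕ Fin n → ℝ)
    (hsub : (fun w => z₀ + T.mulVec w) '' ballh n ℏ
      ⊆ {z | (z ∘ Sum.inl) ∈ X ∧ (z ∘ Sum.inr) ∈ Xd}) :
    |T.det| ≤ 1 :=
  det_le_one_of_ellipsoid_subset_product_general ℏ hℏ A hA X hX Xd hXd T z₀ hsub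
end
end

section
/- Let M be a real symmetric positive definite 2n×2n matrix and Ω := {z ∈ ℝ^{2n} : Mz·z ≤ ℏ}. Then the symplectic ℏ-polar dual of Ω is the ellipsoid Ω^{ℏ,ω} = {z ∈ ℝ^{2n} : (−J M⁻¹ J)z·z ≤ ℏ} = J(Ω^ℏ), where Ω^ℏ = {z' : z'·z ≤ ℏ for all z ∈ Ω} is the ordinary ℏ-polar dual of Ω in ℝ^{2n}. -/
open Matrix Set

noncomputable section

/-- The standard symplectic matrix `J = [[0, I],[-I, 0]]` on `ℝ²ⁿ = ℝⁿ ⊕ ℝⁿ`. -/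
def J (n : ℕ) : Matrix (Fin n ⊕ Fin n) (Fin n ⊕ Fin n) ℝ :=
  Matrix.fromBlocks 0 1 (-1) 0

/-- The standard symplectic form `ω(z,z') = p·x' - p'·x = (Jz)·z'`. -/
def symplForm {n : ℕ} (z z' : Fin n ⊕ Fin n → ℝ) : ℝ :=
  (J n).mulVec z ⬝ᵥ z'

/-- The symplectic ℏ-polar dual `Ω^{ℏ,ω} = {z' : ω(z,z') ≤ ℏ for all z ∈ Ω}`. -/
def symplDual {n : ℕ} (ℏ : ℝ) (Ω : Set (Fin n ⊕ Fin n → ℝ)) : Set (Fin n ⊕ Fin n → ℝ) :=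
  {z' | ∀ z ∈ Ω, symplForm z z' ≤ ℏ}

/-- The ordinary ℏ-polar dual of `Ω ⊆ ℝ²ⁿ` (identifying `ℝ²ⁿ` with its dual). -/
def polarDual2n {n : ℕ} (ℏ : ℝ) (Ω : Set (Fin n ⊕ Fin n → ℝ)) : Set (Fin n ⊕ Fin n → ℝ) :=
  {z' | ∀ z ∈ Ω, z' ⬝ᵥ z ≤ ℏ}

/-! Both duals are governed by the Cauchy–Schwarz inequality `(w·z)² ≤ (M⁻¹w·w)(Mz·z)` for the
inner product defined by `M`, with equality at `z ∥ M⁻¹w`; hence the ordinary ℏ-polar dual of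
`{Mz·z ≤ ℏ}` is `{M⁻¹w·w ≤ ℏ}`. Since `ω(z, z') = (-Jz')·z`, the symplectic dual is the preimage of
the ordinary one under `-J = J⁻¹`, that is its image under `J`, and pulling the quadratic form
back along `-J` turns `M⁻¹` into `(-J)ᵀ M⁻¹ (-J) = -J M⁻¹ J`. -/

namespace Matrix

variable {ι : Type*} [Fintype ι]

lemma mulVec_mulVec_dotProduct_mulVec {R : Type*} [CommSemiring R] (A B : Matrix ι ι R)
    (z : ι → R) :
    A *ᵥ (B *ᵥ z) ⬝ᵥ B *ᵥ z = (Bᵀ * A * B) *ᵥ z ⬝ᵥ z := by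
  rw [mulVec_mulVec, Matrix.mul_assoc, ← mulVec_mulVec z Bᵀ, mulVec_transpose, ← dotProduct_mulVec]

lemma PosSemidef.mulVec_dotProduct_sq_le {M : Matrix ι ι ℝ} (hM : M.PosSemidef) (x y : ι → ℝ) :
    (M *ᵥ x ⬝ᵥ y) ^ 2 ≤ (M *ᵥ x ⬝ᵥ x) * (M *ᵥ y ⬝ᵥ y) := by
  let _ := M.toSeminormedAddCommGroup hM
  let _ := M.toInnerProductSpace hM
  have h := real_inner_mul_inner_self_le y x
  change (M *ᵥ x ⬝ᵥ star y) * (M *ᵥ x ⬝ᵥ star y) ≤ (M *ᵥ y ⬝ᵥ star y) * (M *ᵥ x ⬝ᵥ star x) at h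
  simp only [star_trivial] at h
  linarith

variable [DecidableEq ι] {M : Matrix ι ι ℝ}

lemma mulVec_nonsing_inv_mulVec (hM : IsUnit M) (w : ι → ℝ) : M *ᵥ (M⁻¹ *ᵥ w) = w := by
  rw [mulVec_mulVec, mul_nonsing_inv M ((isUnit_iff_isUnit_det M).mp hM), one_mulVec]

lemma PosDef.dotProduct_sq_le (hM : M.PosDef) (w z : ι → ℝ) :
    (w ⬝ᵥ z) ^ 2 ≤ (M⁻¹ *ᵥ w ⬝ᵥ w) * (M *ᵥ z ⬝ᵥ z) := by
  simpa only [mulVec_nonsing_inv_mulVec hM.isUnit, dotProduct_comm w] using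
    hM.posSemidef.mulVec_dotProduct_sq_le (M⁻¹ *ᵥ w) z

lemma PosDef.forall_dotProduct_le_iff (hM : M.PosDef) {c : ℝ} (hc : 0 < c) (w : ι → ℝ) :
    (∀ z, M *ᵥ z ⬝ᵥ z ≤ c → w ⬝ᵥ z ≤ c) ↔ M⁻¹ *ᵥ w ⬝ᵥ w ≤ c := by
  have hs : 0 ≤ M⁻¹ *ᵥ w ⬝ᵥ w := by
    simpa only [star_trivial, dotProduct_comm w] using hM.inv.posSemidef.dotProduct_mulVec_nonneg w
  set s := M⁻¹ *ᵥ w ⬝ᵥ w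
  constructor
  · intro hw
    -- `t = 2c/(c+s)` replaces the optimal scaling `√(c/s)`: `t²s ≤ c` is AM–GM `4cs ≤ (c+s)²`.
    set t := 2 * c / (c + s) with ht_def
    have hcs : 0 < c + s := by linarith
    have hz : M *ᵥ (t • M⁻¹ *ᵥ w) ⬝ᵥ t • M⁻¹ *ᵥ w = t ^ 2 * s := by
      rw [mulVec_smul, mulVec_nonsing_inv_mulVec hM.isUnit, smul_dotProduct, dotProduct_smul,
        smul_eq_mul, smul_eq_mul, dotProduct_comm w]
      ring
    have hwz : w ⬝ᵥ t • M⁻¹ *ᵥ w = t * s := by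
      rw [dotProduct_smul, dotProduct_comm, smul_eq_mul]
    have hmem : t ^ 2 * s ≤ c := by
      rw [ht_def, div_pow, div_mul_eq_mul_div, div_le_iff₀ (by positivity)]
      nlinarith [sq_nonneg (c - s)]
    have h := hw _ (hz ▸ hmem)
    rw [hwz, ht_def, div_mul_eq_mul_div, div_le_iff₀ hcs] at h
    nlinarith
  · intro hw z hz
    have hq : 0 ≤ M *ᵥ z ⬝ᵥ z := by
      simpa only [star_trivial, dotProduct_comm z] using hM.posSemidef.dotProduct_mulVec_nonneg z
    have hsq : (w ⬝ᵥ z) ^ 2 ≤ c ^ 2 := by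
      calc (w ⬝ᵥ z) ^ 2 ≤ s * (M *ᵥ z ⬝ᵥ z) := hM.dotProduct_sq_le w z
        _ ≤ c ^ 2 := by rw [sq]; exact mul_le_mul hw hz hq hc.le
    exact le_of_sq_le_sq hsq hc.le

end Matrix

lemma J_eq_neg_matrixJ (n : ℕ) : J n = -Matrix.J (Fin n) ℝ := by
  rw [_root_.J, Matrix.J, fromBlocks_neg, neg_zero, neg_neg]

lemma transpose_J (n : ℕ) : (J n)ᵀ = -J n := by
  rw [J_eq_neg_matrixJ, transpose_neg, Matrix.J_transpose]

lemma J_mul_self (n : ℕ) : J n * J n = -1 := by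
  rw [J_eq_neg_matrixJ, neg_mul_neg, J_squared]

lemma symplForm_eq_neg_J_mulVec_dotProduct {n : ℕ} (z z' : Fin n ⊕ Fin n → ℝ) :
    symplForm z z' = -J n *ᵥ z' ⬝ᵥ z := by
  rw [symplForm, dotProduct_comm, dotProduct_mulVec, ← mulVec_transpose, transpose_J]

lemma symplDual_eq_preimage_polarDual2n {n : ℕ} (ℏ : ℝ) (Ω : Set (Fin n ⊕ Fin n → ℝ)) :
    symplDual ℏ Ω = (-J n *ᵥ ·) ⁻¹' polarDual2n ℏ Ω := by
  ext z'
  simp only [symplDual, polarDual2n, symplForm_eq_neg_J_mulVec_dotProduct, mem_ofPred_eq,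
    mem_preimage]

lemma preimage_neg_J_mulVec {n : ℕ} (s : Set (Fin n ⊕ Fin n → ℝ)) :
    (-J n *ᵥ ·) ⁻¹' s = (J n *ᵥ ·) '' s := by
  have hJ : ∀ z, -J n *ᵥ (J n *ᵥ z) = z := fun z => by
    rw [mulVec_mulVec, neg_mul, J_mul_self, neg_neg, one_mulVec]
  have hJ' : ∀ z, J n *ᵥ (-J n *ᵥ z) = z := fun z => by
    rw [mulVec_mulVec, mul_neg, J_mul_self, neg_neg, one_mulVec]
  exact (congrFun (image_eq_preimage_of_inverse hJ hJ') s).symm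

lemma polarDual2n_ellipsoid {n : ℕ} {ℏ : ℝ} (hℏ : 0 < ℏ)
    {M : Matrix (Fin n ⊕ Fin n) (Fin n ⊕ Fin n) ℝ} (hM : M.PosDef) :
    polarDual2n ℏ {z | M *ᵥ z ⬝ᵥ z ≤ ℏ} = {w | M⁻¹ *ᵥ w ⬝ᵥ w ≤ ℏ} :=
  Set.ext fun w => hM.forall_dotProduct_le_iff hℏ w

/-- for a symmetric positive definite `M` and `Ω = {z : Mz·z ≤ ℏ}`,
`Ω^{ℏ,ω} = {z : (-J M⁻¹ J) z · z ≤ ℏ} = J(Ω^ℏ)`. -/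
theorem symplDual_of_ellipsoid
    {n : ℕ} (ℏ : ℝ) (hℏ : 0 < ℏ)
    (M : Matrix (Fin n ⊕ Fin n) (Fin n ⊕ Fin n) ℝ) (hM : M.PosDef)
    (Ω : Set (Fin n ⊕ Fin n → ℝ)) (hΩ : Ω = {z | M.mulVec z ⬝ᵥ z ≤ ℏ}) :
    symplDual ℏ Ω = {z | (-(J n * M⁻¹ * J n)).mulVec z ⬝ᵥ z ≤ ℏ}
    ∧ symplDual ℏ Ω = (fun z => (J n).mulVec z) '' polarDual2n ℏ Ω := by
  rw [symplDual_eq_preimage_polarDual2n]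
  refine ⟨?_, preimage_neg_J_mulVec _⟩
  rw [hΩ, polarDual2n_ellipsoid hℏ hM]
  ext z
  rw [mem_preimage, mem_ofPred_eq, mem_ofPred_eq, mulVec_mulVec_dotProduct_mulVec, transpose_neg,
    transpose_J, neg_neg, mul_neg]
end
end
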